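/- arXiv:2308.08604 — 3 statements merged into one kernel-verified Lean document; each statement's English description precedes it below -/
import Mathlib

section
/- Let D_1 and D_2 be finite simple graphs on disjoint vertex sets, each having at least one edge, and let D = D_1 * D_2 be their join. Then v(D) = min{ v(D_1), v(D_2) }. -/
open MvPolynomial

noncomputable section

/-- The `v`-number of a graded ideal `I ⊆ K[x_1,…,x_t]`: the least `k ≥ 0` such that there is a
homogeneous polynomial `f` of degree `k` with `(I : f)` an associated prime of `S/I`. -/
def vNumber {σ K : Type*} [Field K] (I : Ideal (MvPolynomial σ K)) : ℕ :=
  sInf {k : ℕ | ∃ f : MvPolynomial σ K, f.IsHomogeneous k ∧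
    Submodule.colon I (Ideal.span {f}) ∈
      associatedPrimes (MvPolynomial σ K) (MvPolynomial σ K ⧸ I)}

/-- The edge ideal of a simple graph: generated by `x_i * x_j` for edges `{x_i, x_j}`. -/
def edgeIdeal (K : Type*) [Field K] {V : Type*} (G : SimpleGraph V) :
    Ideal (MvPolynomial V K) :=
  Ideal.span {m | ∃ i j, G.Adj i j ∧ m = X i * X j}

/-- `I` is a monomial ideal: generated by a set of monomials. -/
def IsMonomialIdeal {σ K : Type*} [Field K] (I : Ideal (MvPolynomial σ K)) : Prop :=
  ∃ A : Set (σ →₀ ℕ), I = Ideal.span ((fun a => (monomial a (1 : K))) '' A)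

/-- The graded maximal ideal `𝔪 = ⟨x_1,…,x_t⟩`. -/
def maxIdeal (K : Type*) [Field K] (σ : Type*) : Ideal (MvPolynomial σ K) :=
  Ideal.span (Set.range (X : σ → MvPolynomial σ K))

/-- `α(I)`: the minimum degree of a nonzero element of `I`. -/
def alphaNumber {σ K : Type*} [Field K] (I : Ideal (MvPolynomial σ K)) : ℕ :=
  sInf {d : ℕ | ∃ f ∈ I, f ≠ 0 ∧ f.totalDegree = d}

/-- Exponent vectors of the minimal monomial generators of a monomial ideal `I`:
monomials in `I` none of whose proper divisors lies in `I`. -/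
def minimalGenerators {σ K : Type*} [Field K] (I : Ideal (MvPolynomial σ K)) :
    Set (σ →₀ ℕ) :=
  {a | (monomial a (1 : K)) ∈ I ∧
    ∀ b : σ →₀ ℕ, b ≤ a → b ≠ a → (monomial b (1 : K)) ∉ I}

/-- The join of two graphs on disjoint vertex sets: keep all edges of both graphs and add all
edges between the two vertex sets. -/
def graphJoin {α β : Type*} (G : SimpleGraph α) (H : SimpleGraph β) : SimpleGraph (α ⊕ β) :=
  SimpleGraph.fromRel fun x y =>
    (∃ a b, x = Sum.inl a ∧ y = Sum.inl b ∧ G.Adj a b) ∨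
    (∃ a b, x = Sum.inr a ∧ y = Sum.inr b ∧ H.Adj a b) ∨
    (∃ a b, x = Sum.inl a ∧ y = Sum.inr b)

/-!
Write `D = G * H`. Every variable of `H` is adjacent in `D` to every variable of `G`, so
`(x_H) * (x_G) ⊆ I(D)`, while the substitution `x_H ↦ 0` (`killCompl`) maps `I(D)` into `I(G)`
and changes a polynomial only by an element of `(x_H)`. Splitting products accordingly gives:
* if `f` is homogeneous of positive degree in the variables of `G`, then `(I(D) : f)` is the
  preimage of `(I(G) : f)` under `x_H ↦ 0`; degree `0` cannot occur, as `I(G)` is not prime;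
* if `(I(D) : F)` is prime and misses a variable of `G`, then `(I(G) : F|_{x_H = 0})` is the
  contraction of `(I(D) : F)` to `K[x_G]`.
A prime `(I(D) : F)` always misses some variable, because `I(D)` is squarefree. So the degrees
realising the v-number of `D` are those of `G` together with those of `H`. Both sets are
nonempty: for a maximal independent set `A`, `(I : x_A)` is the prime ideal generated by the
variables outside `A`.
-/

namespace Ideal

variable {R : Type*} [CommRing R] {I : Ideal R} {f : R}

theorem colon_span_singleton_mem_associatedPrimes
    (h : (I.colon (span {f})).IsPrime) :
    I.colon (span {f}) ∈ associatedPrimes R (R ⧸ I) := by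
  have hcolon : (⊥ : Submodule R (R ⧸ I)).colon {Quotient.mk I f} =
      I.colon (span {f}) := by
    ext r
    rw [mem_colon_span_singleton, Submodule.mem_colon_singleton, Submodule.mem_bot,
      Algebra.smul_def, Quotient.algebraMap_eq, ← map_mul, Quotient.eq_zero_iff_mem]
  exact ⟨h, Quotient.mk I f, by rw [hcolon, h.radical]⟩

theorem notMem_of_isPrime_colon_span_singleton
    (h : (I.colon (span {f})).IsPrime) : f ∉ I := fun hf =>
  h.ne_top <| eq_top_iff.2 fun r _ => mem_colon_span_singleton.2 (I.mul_mem_left r hf)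

theorem colon_span_singleton_of_isUnit (hf : IsUnit f) :
    I.colon (span {f}) = I := by
  ext r
  rw [mem_colon_span_singleton, mul_unit_mem_iff_mem I hf]

end Ideal

namespace Finsupp

theorem single_one_add_single_one_le_iff {ι : Type*} {i j : ι} (hij : i ≠ j) {d : ι →₀ ℕ} :
    single i 1 + single j 1 ≤ d ↔ d i ≠ 0 ∧ d j ≠ 0 := by
  classical
  simp only [le_def, add_apply, single_apply]
  constructor
  · intro h
    have hi := h i
    have hj := h j
    simp only [if_true, if_neg hij, if_neg hij.symm] at hi hj
    omega
  · intro h v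
    by_cases hvi : i = v
    · subst hvi; simp only [if_true, if_neg hij.symm]; omega
    · by_cases hvj : j = v
      · subst hvj; simp only [if_true, if_neg hvi]; omega
      · simp [hvi, hvj]

end Finsupp

namespace MvPolynomial

variable {R σ τ : Type*} {u : σ → τ} (hu : Function.Injective u)

theorem killCompl_X [CommSemiring R] (a : σ) :
    killCompl hu (X (u a) : MvPolynomial τ R) = X a := by
  simpa using killCompl_rename_app hu (X a : MvPolynomial σ R)

theorem killCompl_X_of_notMem_range [CommSemiring R] {v : τ} (hv : v ∉ Set.range u) :
    killCompl hu (X v : MvPolynomial τ R) = 0 := by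
  rw [killCompl, aeval_X, dif_neg hv]

theorem IsHomogeneous.killCompl_isHomogeneous [CommSemiring R] {g : MvPolynomial τ R} {k : ℕ}
    (hg : g.IsHomogeneous k) : (killCompl hu g).IsHomogeneous k := by
  rw [killCompl, ← one_mul k]
  exact hg.aeval _ fun v => by
    split_ifs
    exacts [isHomogeneous_X R _, isHomogeneous_zero _ _ _]

theorem sub_rename_killCompl_mem_span_X [CommRing R] (g : MvPolynomial τ R) :
    g - rename u (killCompl hu g) ∈ Ideal.span (X '' (Set.range u)ᶜ) := by
  set J : Ideal (MvPolynomial τ R) := Ideal.span (X '' (Set.range u)ᶜ)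
  have hcomp : (Ideal.Quotient.mkₐ R J).comp ((rename u).comp (killCompl hu)) =
      Ideal.Quotient.mkₐ R J := by
    ext v
    by_cases hv : v ∈ Set.range u
    · obtain ⟨a, rfl⟩ := hv
      simp [killCompl_X]
    · have hXv : X v ∈ J := Ideal.subset_span ⟨v, hv, rfl⟩
      simpa [killCompl_X_of_notMem_range hu hv] using
        (Ideal.Quotient.eq_zero_iff_mem.2 hXv).symm
  rw [← Ideal.Quotient.eq]
  exact (AlgHom.congr_fun hcomp g).symm

theorem IsHomogeneous.mem_idealOfVars [CommSemiring R] {g : MvPolynomial σ R} {k : ℕ}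
    (hg : g.IsHomogeneous k) (hk : k ≠ 0) : g ∈ idealOfVars σ R := by
  rw [← pow_one (idealOfVars σ R), mem_pow_idealOfVars_iff]
  intro d hd
  have hdeg : d.degree = k := by
    rw [Finsupp.degree_eq_weight_one]
    exact hg (mem_support_iff.1 hd)
  omega

theorem rename_mem_span_X_range [CommSemiring R] {g : MvPolynomial σ R}
    (hg : g ∈ idealOfVars σ R) : rename u g ∈ Ideal.span (X '' Set.range u) := by
  suffices idealOfVars σ R ≤ (Ideal.span (X '' Set.range u)).comap (rename u) from this hg
  refine Ideal.span_le.2 ?_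
  rintro _ ⟨a, rfl⟩
  simpa using Ideal.subset_span (Set.mem_image_of_mem X (Set.mem_range_self a))

end MvPolynomial

section

variable {K : Type*} [Field K]

def vDegrees {σ : Type*} (I : Ideal (MvPolynomial σ K)) : Set ℕ :=
  {k | ∃ f : MvPolynomial σ K, f.IsHomogeneous k ∧
    I.colon (Ideal.span {f}) ∈ associatedPrimes (MvPolynomial σ K) (MvPolynomial σ K ⧸ I)}

theorem vNumber_eq_sInf_vDegrees {σ : Type*} (I : Ideal (MvPolynomial σ K)) :
    vNumber I = sInf (vDegrees I) := rfl

section EdgeIdeal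

variable {V : Type*} {G : SimpleGraph V} {f : MvPolynomial V K}

theorem X_mul_X_mem_edgeIdeal {i j : V} (h : G.Adj i j) :
    (X i * X j : MvPolynomial V K) ∈ edgeIdeal K G :=
  Ideal.subset_span ⟨i, j, h, rfl⟩

theorem edgeIdeal_bot : edgeIdeal K (⊥ : SimpleGraph V) = ⊥ := by
  simp [edgeIdeal]

theorem mem_edgeIdeal_iff :
    f ∈ edgeIdeal K G ↔ ∀ d ∈ f.support, ∃ i j, G.Adj i j ∧ d i ≠ 0 ∧ d j ≠ 0 := by
  have hspan : edgeIdeal K G = Ideal.span ((monomial · (1 : K)) ''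
      {d | ∃ i j, G.Adj i j ∧ d = Finsupp.single i 1 + Finsupp.single j 1}) := by
    unfold edgeIdeal
    congr 1
    ext m
    simp [X, monomial_mul, eq_comm]
  rw [hspan, mem_ideal_span_monomial_image]
  refine forall₂_congr fun d _ => ⟨?_, ?_⟩
  · rintro ⟨_, ⟨i, j, h, rfl⟩, hle⟩
    exact ⟨i, j, h, (Finsupp.single_one_add_single_one_le_iff h.ne).1 hle⟩
  · rintro ⟨i, j, h, hd⟩
    exact ⟨_, ⟨i, j, h, rfl⟩, (Finsupp.single_one_add_single_one_le_iff h.ne).2 hd⟩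

theorem X_notMem_edgeIdeal (v : V) : (X v : MvPolynomial V K) ∉ edgeIdeal K G := by
  rw [mem_edgeIdeal_iff, support_X]
  simp only [Finset.mem_singleton, forall_eq, Finsupp.single_apply_ne_zero]
  rintro ⟨i, j, h, ⟨rfl, -⟩, ⟨rfl, -⟩⟩
  exact h.ne rfl

theorem edgeIdeal_not_isPrime (hG : ∃ a b, G.Adj a b) : ¬ (edgeIdeal K G).IsPrime := by
  obtain ⟨a, b, h⟩ := hG
  intro hP
  rcases hP.mem_or_mem (X_mul_X_mem_edgeIdeal h) with ha | hb
  exacts [X_notMem_edgeIdeal a ha, X_notMem_edgeIdeal b hb]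

theorem exists_X_mul_notMem_edgeIdeal [Nonempty V] (hf : f ∉ edgeIdeal K G) :
    ∃ v, X v * f ∉ edgeIdeal K G := by
  rw [mem_edgeIdeal_iff] at hf
  push Not at hf
  obtain ⟨d, hd, hfree⟩ := hf
  -- Multiplying by a variable already dividing the monomial `x^d` keeps its support edge-free.
  obtain ⟨v, hv⟩ : ∃ v, d = 0 ∨ d v ≠ 0 := by
    by_cases hd0 : d = 0
    · exact ⟨Classical.arbitrary V, .inl hd0⟩
    · obtain ⟨v, hv⟩ := Finsupp.support_nonempty_iff.2 hd0
      exact ⟨v, .inr (Finsupp.mem_support_iff.1 hv)⟩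
  refine ⟨v, fun h => ?_⟩
  have hmem : Finsupp.single v 1 + d ∈ (X v * f).support := by
    rw [support_X_mul]
    exact Finset.mem_map_of_mem _ hd
  obtain ⟨i, j, hij, hi, hj⟩ := mem_edgeIdeal_iff.1 h _ hmem
  rcases hv with rfl | hv
  · simp only [add_zero, Finsupp.single_apply_ne_zero] at hi hj
    exact hij.ne (hi.1.trans hj.1.symm)
  · have hsupp : ∀ w, (Finsupp.single v 1 + d : V →₀ ℕ) w ≠ 0 → d w ≠ 0 := by
      intro w hw
      by_cases hwv : w = v
      · rwa [hwv]
      · simpa [Finsupp.single_apply, Ne.symm hwv] using hw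
    exact hsupp j hj (hfree i j hij (hsupp i hi))

theorem rename_mem_edgeIdeal {W : Type*} {G' : SimpleGraph W} (φ : G →g G')
    (hf : f ∈ edgeIdeal K G) : rename φ f ∈ edgeIdeal K G' := by
  suffices edgeIdeal K G ≤ (edgeIdeal K G').comap (rename φ) from this hf
  refine Ideal.span_le.2 ?_
  rintro _ ⟨i, j, h, rfl⟩
  simpa using X_mul_X_mem_edgeIdeal (K := K) (φ.map_adj h)

end EdgeIdeal

section Restriction

variable {V γ : Type*} {D : SimpleGraph V} {u : γ → V}

theorem killCompl_mem_edgeIdeal (hu : Function.Injective u) {f : MvPolynomial V K}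
    (hf : f ∈ edgeIdeal K D) : killCompl hu f ∈ edgeIdeal K (D.comap u) := by
  suffices edgeIdeal K D ≤ (edgeIdeal K (D.comap u)).comap (killCompl hu) from this hf
  refine Ideal.span_le.2 ?_
  rintro _ ⟨i, j, h, rfl⟩
  rw [SetLike.mem_coe, Ideal.mem_comap, map_mul]
  by_cases hi : i ∈ Set.range u
  · by_cases hj : j ∈ Set.range u
    · obtain ⟨a, rfl⟩ := hi
      obtain ⟨b, rfl⟩ := hj
      rw [killCompl_X, killCompl_X]
      exact X_mul_X_mem_edgeIdeal h
    · rw [killCompl_X_of_notMem_range hu hj, mul_zero]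
      exact zero_mem _
  · rw [killCompl_X_of_notMem_range hu hi, zero_mul]
    exact zero_mem _

theorem mul_mem_edgeIdeal_of_cone (hcone : ∀ v ∉ Set.range u, ∀ a, D.Adj v (u a))
    {p q : MvPolynomial V K} (hp : p ∈ Ideal.span (X '' (Set.range u)ᶜ))
    (hq : q ∈ Ideal.span (X '' Set.range u)) : p * q ∈ edgeIdeal K D := by
  suffices Ideal.span (X '' (Set.range u)ᶜ) * Ideal.span (X '' Set.range u) ≤ edgeIdeal K D from
    this (Ideal.mul_mem_mul hp hq)
  rw [Ideal.span_mul_span', Ideal.span_le]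
  rintro _ ⟨_, ⟨v, hv, rfl⟩, _, ⟨_, ⟨a, rfl⟩, rfl⟩, rfl⟩
  exact X_mul_X_mem_edgeIdeal (hcone v hv a)

theorem colon_rename_eq_comap_colon (hu : Function.Injective u)
    (hcone : ∀ v ∉ Set.range u, ∀ a, D.Adj v (u a)) {f : MvPolynomial γ K}
    (hf : f ∈ idealOfVars γ K) :
    (edgeIdeal K D).colon (Ideal.span {rename u f}) =
      ((edgeIdeal K (D.comap u)).colon (Ideal.span {f})).comap (killCompl hu) := by
  ext g
  rw [Ideal.mem_comap, Ideal.mem_colon_span_singleton, Ideal.mem_colon_span_singleton]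
  refine ⟨fun h => by simpa using killCompl_mem_edgeIdeal hu h, fun h => ?_⟩
  have hsplit : g * rename u f =
      (g - rename u (killCompl hu g)) * rename u f + rename u (killCompl hu g * f) := by
    rw [map_mul]; ring
  rw [hsplit]
  exact add_mem
    (mul_mem_edgeIdeal_of_cone hcone (sub_rename_killCompl_mem_span_X hu g)
      (rename_mem_span_X_range hf))
    (rename_mem_edgeIdeal (G := D.comap u) ⟨u, id⟩ h)

theorem vDegrees_comap_subset (hu : Function.Injective u)
    (hcone : ∀ v ∉ Set.range u, ∀ a, D.Adj v (u a)) (hS : ∃ a b, (D.comap u).Adj a b) :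
    vDegrees (edgeIdeal K (D.comap u)) ⊆ vDegrees (edgeIdeal K D) := by
  rintro k ⟨f, hf, hP⟩
  have hk : k ≠ 0 := by
    rintro rfl
    obtain ⟨c, rfl⟩ : ∃ c, f = C c :=
      ⟨_, totalDegree_eq_zero_iff_eq_C.1 ((totalDegree_zero_iff_isHomogeneous _).2 hf)⟩
    have hc : c ≠ 0 := by
      rintro rfl
      exact Ideal.notMem_of_isPrime_colon_span_singleton hP.1 (by simp)
    rw [Ideal.colon_span_singleton_of_isUnit ((isUnit_iff_ne_zero.2 hc).map C)] at hP
    exact edgeIdeal_not_isPrime hS hP.1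
  refine ⟨rename u f, hf.rename_isHomogeneous, Ideal.colon_span_singleton_mem_associatedPrimes ?_⟩
  rw [colon_rename_eq_comap_colon hu hcone (hf.mem_idealOfVars hk)]
  have := hP.1
  exact Ideal.IsPrime.comap _

theorem colon_killCompl_eq_comap_colon (hu : Function.Injective u)
    (hcone : ∀ v ∉ Set.range u, ∀ a, D.Adj v (u a)) {F : MvPolynomial V K}
    (hQ : ((edgeIdeal K D).colon (Ideal.span {F})).IsPrime) {a₀ : γ}
    (ha₀ : X (u a₀) ∉ (edgeIdeal K D).colon (Ideal.span {F})) :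
    (edgeIdeal K (D.comap u)).colon (Ideal.span {killCompl hu F}) =
      ((edgeIdeal K D).colon (Ideal.span {F})).comap (rename u) := by
  ext p
  rw [Ideal.mem_comap, Ideal.mem_colon_span_singleton, Ideal.mem_colon_span_singleton]
  refine ⟨fun h => ?_, fun h => by simpa using killCompl_mem_edgeIdeal hu h⟩
  have hsplit : X (u a₀) * rename u p * F = (F - rename u (killCompl hu F)) *
      (X (u a₀) * rename u p) + X (u a₀) * rename u (p * killCompl hu F) := by
    rw [map_mul]; ring
  have hmem : X (u a₀) * rename u p ∈ (edgeIdeal K D).colon (Ideal.span {F}) := by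
    rw [Ideal.mem_colon_span_singleton, hsplit]
    exact add_mem
      (mul_mem_edgeIdeal_of_cone hcone (sub_rename_killCompl_mem_span_X hu F)
        (Ideal.mul_mem_right _ _ (Ideal.subset_span ⟨u a₀, ⟨a₀, rfl⟩, rfl⟩)))
      (Ideal.mul_mem_left _ _ (rename_mem_edgeIdeal (G := D.comap u) ⟨u, id⟩ h))
  exact Ideal.mem_colon_span_singleton.1 ((hQ.mem_or_mem hmem).resolve_left ha₀)

theorem mem_vDegrees_comap (hu : Function.Injective u)
    (hcone : ∀ v ∉ Set.range u, ∀ a, D.Adj v (u a)) {F : MvPolynomial V K} {k : ℕ}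
    (hF : F.IsHomogeneous k)
    (hQ : (edgeIdeal K D).colon (Ideal.span {F}) ∈
      associatedPrimes (MvPolynomial V K) (MvPolynomial V K ⧸ edgeIdeal K D)) {a₀ : γ}
    (ha₀ : X (u a₀) ∉ (edgeIdeal K D).colon (Ideal.span {F})) :
    k ∈ vDegrees (edgeIdeal K (D.comap u)) := by
  refine ⟨killCompl hu F, hF.killCompl_isHomogeneous hu,
    Ideal.colon_span_singleton_mem_associatedPrimes ?_⟩
  rw [colon_killCompl_eq_comap_colon hu hcone hQ.1 ha₀]
  have := hQ.1
  exact Ideal.IsPrime.comap _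

theorem colon_rename_prod_X_eq_ker_killCompl [Fintype γ] (hu : Function.Injective u)
    (hind : D.comap u = ⊥)
    (hdom : ∀ v ∉ Set.range u, ∃ a, D.Adj v (u a)) :
    (edgeIdeal K D).colon (Ideal.span {rename u (∏ a, X a : MvPolynomial γ K)}) =
      RingHom.ker (killCompl (R := K) hu) := by
  ext g
  rw [Ideal.mem_colon_span_singleton, RingHom.mem_ker]
  constructor
  · intro h
    have h' := killCompl_mem_edgeIdeal hu h
    rw [hind, edgeIdeal_bot, Ideal.mem_bot, map_mul, killCompl_rename_app] at h'
    exact (mul_eq_zero.1 h').resolve_right (Finset.prod_ne_zero_iff.2 fun a _ => X_ne_zero a)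
  · intro h
    classical
    have hg := sub_rename_killCompl_mem_span_X hu g
    rw [h, map_zero, sub_zero] at hg
    refine Ideal.mem_colon_span_singleton.1 (Ideal.span_le.2 ?_ hg)
    rintro _ ⟨v, hv, rfl⟩
    obtain ⟨a, hva⟩ := hdom v hv
    rw [SetLike.mem_coe, Ideal.mem_colon_span_singleton, map_prod,
      ← Finset.mul_prod_erase _ _ (Finset.mem_univ a), rename_X, ← mul_assoc]
    exact Ideal.mul_mem_right _ _ (X_mul_X_mem_edgeIdeal hva)

end Restriction

section IndepSet

variable {V : Type*}

theorem exists_isIndepSet_forall_exists_adj [Finite V] (G : SimpleGraph V) :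
    ∃ A : Finset V, G.IsIndepSet (A : Set V) ∧ ∀ v ∉ A, ∃ a ∈ A, G.Adj v a := by
  classical
  obtain ⟨A, -, hA⟩ :=
    Finite.exists_le_maximal (p := fun A : Finset V => G.IsIndepSet (A : Set V)) (a := ∅)
      (by simp)
  refine ⟨A, hA.prop, fun v hv => ?_⟩
  by_contra! hfree
  have hins : G.IsIndepSet ((insert v A : Finset V) : Set V) := by
    rw [Finset.coe_insert, SimpleGraph.isIndepSet_iff, Set.pairwise_insert]
    exact ⟨hA.prop, fun a ha _ => ⟨hfree a ha, fun h => hfree a ha h.symm⟩⟩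
  exact hv (hA.2 hins (Finset.subset_insert v A) (Finset.mem_insert_self v A))

theorem vDegrees_edgeIdeal_nonempty [Finite V] (G : SimpleGraph V) :
    (vDegrees (edgeIdeal K G)).Nonempty := by
  obtain ⟨A, hind, hdom⟩ := exists_isIndepSet_forall_exists_adj G
  have hbot : G.comap ((↑) : A → V) = ⊥ := by
    ext a b
    simpa using fun hab => hind a.2 b.2 hab.ne hab
  refine ⟨_, rename ((↑) : A → V) (∏ a, X a : MvPolynomial A K),
    (IsHomogeneous.prod _ _ _ fun a _ => isHomogeneous_X K a).rename_isHomogeneous,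
    Ideal.colon_span_singleton_mem_associatedPrimes ?_⟩
  rw [colon_rename_prod_X_eq_ker_killCompl Subtype.val_injective hbot
    fun v hv => by simpa using hdom v (by simpa using hv)]
  exact RingHom.ker_isPrime _

end IndepSet

section Join

variable {α β : Type*} {G : SimpleGraph α} {H : SimpleGraph β}

@[simp]
theorem graphJoin_adj_inl_inr (a : α) (b : β) :
    (graphJoin G H).Adj (Sum.inl a) (Sum.inr b) := by
  simp [graphJoin]

@[simp]
theorem comap_inl_graphJoin : (graphJoin G H).comap Sum.inl = G := by
  ext a b
  simpa [graphJoin, G.adj_comm b a] using fun h => h.ne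

@[simp]
theorem comap_inr_graphJoin : (graphJoin G H).comap Sum.inr = H := by
  ext a b
  simpa [graphJoin, H.adj_comm b a] using fun h => h.ne

theorem vDegrees_edgeIdeal_graphJoin (hG : ∃ a b, G.Adj a b) (hH : ∃ a b, H.Adj a b) :
    vDegrees (edgeIdeal K (graphJoin G H)) =
      vDegrees (edgeIdeal K G) ∪ vDegrees (edgeIdeal K H) := by
  have hconeL : ∀ v ∉ Set.range Sum.inl, ∀ a, (graphJoin G H).Adj v (Sum.inl a) := by
    rintro (a | b) hv a'
    exacts [absurd ⟨a, rfl⟩ hv, (graphJoin_adj_inl_inr a' b).symm]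
  have hconeR : ∀ v ∉ Set.range Sum.inr, ∀ b, (graphJoin G H).Adj v (Sum.inr b) := by
    rintro (a | b) hv b'
    exacts [graphJoin_adj_inl_inr a b', absurd ⟨b, rfl⟩ hv]
  have hL := vDegrees_comap_subset (K := K) Sum.inl_injective hconeL (by simpa using hG)
  have hR := vDegrees_comap_subset (K := K) Sum.inr_injective hconeR (by simpa using hH)
  rw [comap_inl_graphJoin] at hL
  rw [comap_inr_graphJoin] at hR
  refine subset_antisymm ?_ (Set.union_subset hL hR)
  rintro k ⟨F, hF, hQ⟩
  obtain ⟨a, -, -⟩ := hG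
  have : Nonempty (α ⊕ β) := ⟨Sum.inl a⟩
  obtain ⟨v, hv⟩ := exists_X_mul_notMem_edgeIdeal
    (Ideal.notMem_of_isPrime_colon_span_singleton hQ.1)
  rw [← Ideal.mem_colon_span_singleton] at hv
  rcases v with a₀ | b₀
  · simpa using Or.inl (mem_vDegrees_comap Sum.inl_injective hconeL hF hQ hv)
  · simpa using Or.inr (mem_vDegrees_comap Sum.inr_injective hconeR hF hQ hv)

end Join

end

/-- v(D₁ * D₂) = min{v(D₁), v(D₂)}. -/
theorem vNumber_join {K : Type*} [Field K] {α β : Type*} [Fintype α] [Fintype β]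
    (G : SimpleGraph α) (H : SimpleGraph β)
    (hG : ∃ a b, G.Adj a b) (hH : ∃ a b, H.Adj a b) :
    vNumber (edgeIdeal K (graphJoin G H)) =
      min (vNumber (edgeIdeal K G)) (vNumber (edgeIdeal K H)) := by
  simp only [vNumber_eq_sInf_vDegrees, vDegrees_edgeIdeal_graphJoin hG hH]
  exact csInf_union (OrderBot.bddBelow _) (vDegrees_edgeIdeal_nonempty G)
    (OrderBot.bddBelow _) (vDegrees_edgeIdeal_nonempty H)
end
end

section
/- Let n ≥ 3 and m ≥ 4, and let H be the graph obtained from the cycle C_n and the path P_m by identifying one vertex of C_n with an endpoint of P_m (a 1-clique sum of C_n and P_m). Then v(C_n) + v(P_{m−2}) − 1 ≤ v(H) ≤ v(C_n) + v(P_{m−2}). -/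
open MvPolynomial

noncomputable section

/-- The 1-clique sum of the cycle `C_n` (on the vertices `0, …, n-1`) and the path `P_m`
(on the vertices `0, n, n+1, …, n+m-2`), identified at the vertex `0`. -/
def cyclePathSum (n m : ℕ) : SimpleGraph (Fin (n + (m - 1))) :=
  SimpleGraph.fromRel fun i j =>
    (j.val = i.val + 1 ∧ i.val + 1 < n) ∨
    (i.val = 0 ∧ j.val = n - 1) ∨
    (i.val = 0 ∧ j.val = n) ∨
    (j.val = i.val + 1 ∧ n ≤ i.val)

/-!
By a theorem of Jaramillo and Villarreal, `v(I(G))` is the least size of a stable set `A` whose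
neighbourhood `N(A)` is a vertex cover: for such an `A` the colon `(I(G) : x_A)` is the prime
`(N(A))`; conversely, if `(I(G) : f)` is prime, the variables it contains form a vertex cover `C`,
and any monomial `x^d` of `f` outside `I(G)` has stable support with `C ⊆ N(supp d)`.

`H` is `C_n` and `P_{m-2}` joined by a path `c — w — p` through the vertex `w` of `P_m` next to
the cycle. Adding a minimum witness of `P_{m-2}` to one of `C_n` containing `c` (which exists by
rotation) gives a witness of `H`. Conversely, a minimum witness of `H` restricts to both sides;
when it contains `w`, each restriction can only fail to cover edges at `c`, resp. `p`, and one
extra vertex on each side repairs this.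
-/

namespace MvPolynomial

variable {σ R : Type*} [CommRing R] [IsDomain R]

theorem isPrime_span_X_image (S : Set σ) :
    (Ideal.span (X '' S) : Ideal (MvPolynomial σ R)).IsPrime := by
  classical
  set P : Ideal (MvPolynomial σ R) := Ideal.span (X '' S)
  let kill : MvPolynomial σ R →ₐ[R] MvPolynomial σ R :=
    aeval fun i => if i ∈ S then 0 else X i
  -- `kill` is the identity modulo `P` and vanishes on `P`, so `P` is its kernel.
  have hmod : (Ideal.Quotient.mkₐ R P).comp kill = Ideal.Quotient.mkₐ R P := by
    refine algHom_ext fun i => ?_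
    by_cases hi : i ∈ S
    · have hXi : X i ∈ P := Ideal.subset_span (Set.mem_image_of_mem X hi)
      simp [kill, hi, Ideal.Quotient.eq_zero_iff_mem.mpr hXi]
    · simp [kill, hi]
  have hker : RingHom.ker kill = P := by
    refine le_antisymm (fun p hp => ?_) (Ideal.span_le.mpr ?_)
    · rw [← Ideal.Quotient.eq_zero_iff_mem, ← Ideal.Quotient.mkₐ_eq_mk R, ← hmod]
      simp [(RingHom.mem_ker).mp hp]
    · rintro _ ⟨i, hi, rfl⟩
      simp [kill, hi]
  exact hker ▸ RingHom.ker_isPrime kill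

end MvPolynomial

theorem Ideal.colon_mem_associatedPrimes_of_isPrime {R : Type*} [CommRing R] {I : Ideal R}
    {f : R} (hP : (I.colon (Ideal.span {f})).IsPrime) :
    I.colon (Ideal.span {f}) ∈ associatedPrimes R (R ⧸ I) := by
  have h : (⊥ : Submodule R (R ⧸ I)).colon {Ideal.Quotient.mk I f} =
      I.colon (Ideal.span {f}) := by
    ext r
    rw [Submodule.mem_colon_singleton, Ideal.mem_colon_span_singleton, Submodule.mem_bot]
    exact Ideal.Quotient.eq_zero_iff_mem
  exact ⟨hP, Ideal.Quotient.mk I f, by rw [h, hP.radical]⟩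

theorem Finsupp.single_add_single_le_iff {V : Type*} {i j : V} (hij : i ≠ j) {d : V →₀ ℕ} :
    Finsupp.single i 1 + Finsupp.single j 1 ≤ d ↔ i ∈ d.support ∧ j ∈ d.support := by
  classical
  rw [Finsupp.le_iff, Finsupp.support_add_eq_union]
  simp [Finsupp.single_apply, hij, hij.symm, Nat.one_le_iff_ne_zero]

theorem Finset.card_preimage_inl_add_card_preimage_inr_add {α β : Type*} [DecidableEq α]
    [DecidableEq β] (A : Finset (Option (α ⊕ β))) :
    (A.preimage (some ∘ Sum.inl) ((Option.some_injective _).comp Sum.inl_injective).injOn).card +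
      (A.preimage (some ∘ Sum.inr) ((Option.some_injective _).comp Sum.inr_injective).injOn).card +
      (if none ∈ A then 1 else 0) = A.card := by
  have hl (h) : A.preimage (some ∘ Sum.inl) h = A.eraseNone.toLeft := by ext; simp
  have hr (h) : A.preimage (some ∘ Sum.inr) h = A.eraseNone.toRight := by ext; simp
  rw [hl, hr, Finset.card_toLeft_add_card_toRight]
  split_ifs with h
  · have := Finset.card_pos.mpr ⟨_, h⟩
    rw [Finset.card_eraseNone_of_mem h]
    omega
  · rw [Finset.card_eraseNone_of_not_mem h, add_zero]

theorem Fin.val_sub_eq_one_iff {n : ℕ} (hn : 2 ≤ n) {u v : Fin n} :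
    (u - v).val = 1 ↔ u.val = v.val + 1 ∨ (u.val = 0 ∧ v.val + 1 = n) := by
  rcases le_or_gt v u with h | h
  · rw [Fin.coe_sub_iff_le.mpr h]
    omega
  · rw [Fin.coe_sub_iff_lt.mpr h]
    omega

namespace SimpleGraph

variable {V W : Type*} (G : SimpleGraph V)

def IsVWitness (A : Finset V) : Prop :=
  G.IsIndepSet A ∧ G.IsVertexCover {v | ∃ a ∈ A, G.Adj a v}

def vNum : ℕ := sInf {k | ∃ A, G.IsVWitness A ∧ A.card = k}

variable {G} {H : SimpleGraph W} {A : Finset V}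

theorem isIndepSet_insert {s : Set V} {a : V} :
    G.IsIndepSet (insert a s) ↔ G.IsIndepSet s ∧ ∀ b ∈ s, ¬ G.Adj b a := by
  rw [isIndepSet_iff, isIndepSet_iff, Set.pairwise_insert]
  refine and_congr_right fun _ => ⟨fun h b hb hba => (h b hb hba.ne.symm).2 hba,
    fun h b hb _ => ⟨fun hab => h b hb hab.symm, h b hb⟩⟩

theorem vNum_le (hA : G.IsVWitness A) : G.vNum ≤ A.card :=
  Nat.sInf_le ⟨A, hA, rfl⟩

theorem exists_isVWitness [Finite V] (G : SimpleGraph V) : ∃ A, G.IsVWitness A := by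
  classical
  obtain ⟨A, hA⟩ := Set.toFinite {A : Finset V | G.IsIndepSet (A : Set V)} |>.exists_maximal
    ⟨∅, by simp⟩
  refine ⟨A, hA.prop, fun u v huv => ?_⟩
  by_cases hu : u ∈ A
  · exact .inr ⟨u, hu, huv⟩
  -- By maximality of `A`, a vertex outside `A` has a neighbour in `A`.
  refine .inl (by_contra fun hN =>
    hu (hA.2 ?_ (Finset.subset_insert u A) (Finset.mem_insert_self u A)))
  show G.IsIndepSet ((insert u A : Finset V) : Set V)
  rw [Finset.coe_insert, isIndepSet_insert]
  exact ⟨hA.prop, fun b hb hbu => hN ⟨b, hb, hbu⟩⟩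

theorem exists_isVWitness_card_eq_vNum [Finite V] (G : SimpleGraph V) :
    ∃ A, G.IsVWitness A ∧ A.card = G.vNum := by
  obtain ⟨A, hA⟩ := exists_isVWitness G
  exact Nat.sInf_mem (s := {k | ∃ A, G.IsVWitness A ∧ A.card = k}) ⟨_, A, hA, rfl⟩

theorem IsVWitness.map (e : G ≃g H) (hA : G.IsVWitness A) :
    H.IsVWitness (A.map e.toEquiv.toEmbedding) := by
  refine ⟨?_, fun u v huv => ?_⟩
  · simp only [Finset.coe_map]
    rintro _ ⟨x, hx, rfl⟩ _ ⟨y, hy, rfl⟩ hne hadj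
    exact hA.1 hx hy (ne_of_apply_ne _ hne) (e.map_adj_iff.mp hadj)
  · have hnbhd (x : W) (hx : ∃ a ∈ A, G.Adj a (e.symm x)) :
        ∃ b ∈ A.map e.toEquiv.toEmbedding, H.Adj b x := by
      obtain ⟨a, ha, hax⟩ := hx
      exact ⟨e a, Finset.mem_map_of_mem _ ha, by simpa using e.map_adj_iff.mpr hax⟩
    exact (hA.2 (e.symm.map_adj_iff.mpr huv)).imp (hnbhd u) (hnbhd v)

theorem Iso.vNum_eq (e : G ≃g H) : G.vNum = H.vNum := by
  unfold vNum
  congr 1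
  ext k
  constructor
  · rintro ⟨A, hA, rfl⟩
    exact ⟨_, hA.map e, Finset.card_map _⟩
  · rintro ⟨A, hA, rfl⟩
    exact ⟨_, hA.map e.symm, Finset.card_map _⟩

end SimpleGraph

section EdgeIdeal

open SimpleGraph

variable {K : Type*} [Field K] {V : Type*} {G : SimpleGraph V}

theorem mem_edgeIdeal_iff_s6 {p : MvPolynomial V K} :
    p ∈ edgeIdeal K G ↔ ∀ d ∈ p.support, ¬ G.IsIndepSet (d.support : Set V) := by
  have hgen : {m : MvPolynomial V K | ∃ i j, G.Adj i j ∧ m = X i * X j} =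
      (fun d => monomial d 1) '' {d | ∃ i j, G.Adj i j ∧
        d = Finsupp.single i 1 + Finsupp.single j 1} := by
    ext m
    simp [X, monomial_mul, eq_comm]
  rw [edgeIdeal, hgen, mem_ideal_span_monomial_image]
  refine forall₂_congr fun d _ => ?_
  simp only [isIndepSet_iff, Set.Pairwise, not_forall, not_not]
  constructor
  · rintro ⟨_, ⟨i, j, hij, rfl⟩, hle⟩
    obtain ⟨hi, hj⟩ := (Finsupp.single_add_single_le_iff hij.ne).mp hle
    exact ⟨i, hi, j, hj, hij.ne, hij⟩
  · rintro ⟨i, hi, j, hj, -, hij⟩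
    exact ⟨_, ⟨i, j, hij, rfl⟩, (Finsupp.single_add_single_le_iff hij.ne).mpr ⟨hi, hj⟩⟩

theorem monomial_mem_edgeIdeal_iff {d : V →₀ ℕ} :
    monomial d (1 : K) ∈ edgeIdeal K G ↔ ¬ G.IsIndepSet (d.support : Set V) := by
  classical
  rw [mem_edgeIdeal_iff_s6, support_monomial, if_neg one_ne_zero]
  simp
theorem colon_edgeIdeal_monomial {d : V →₀ ℕ} (hd : G.IsVWitness d.support) :
    (edgeIdeal K G).colon (Ideal.span {monomial d (1 : K)}) =
      Ideal.span (X '' {v | ∃ a ∈ d.support, G.Adj a v}) := by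
  classical
  refine le_antisymm (fun p hp => ?_) (Ideal.span_le.mpr ?_)
  · rw [Ideal.mem_colon_span_singleton] at hp
    rw [mem_ideal_span_X_image]
    intro e he
    have hed : e + d ∈ (p * monomial d 1).support := by
      simpa [coeff_mul_monomial] using he
    obtain ⟨i, hi, j, hj, -, hij⟩ : ∃ i ∈ (e + d).support, ∃ j ∈ (e + d).support,
        i ≠ j ∧ G.Adj i j := by
      simpa [isIndepSet_iff, Set.Pairwise] using mem_edgeIdeal_iff_s6.mp hp _ hed
    rw [Finsupp.support_add_eq_union, Finset.mem_union] at hi hj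
    -- The endpoint lying in `N(A)` cannot lie in the stable set `A`, so it divides `x^e`.
    rcases hd.2 hij with ⟨a, ha, hai⟩ | ⟨a, ha, haj⟩
    · exact ⟨i, ⟨a, ha, hai⟩, Finsupp.mem_support_iff.mp
        (hi.resolve_right fun hiA => hd.1 ha hiA hai.ne hai)⟩
    · exact ⟨j, ⟨a, ha, haj⟩, Finsupp.mem_support_iff.mp
        (hj.resolve_right fun hjA => hd.1 ha hjA haj.ne haj)⟩
  · rintro _ ⟨v, ⟨a, ha, hav⟩, rfl⟩
    rw [SetLike.mem_coe, Ideal.mem_colon_span_singleton, X, monomial_mul, one_mul,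
      monomial_mem_edgeIdeal_iff, Finsupp.support_add_eq_union, isIndepSet_iff]
    intro h
    exact h (by simp [ha]) (by simp) hav.ne hav

theorem exists_isVWitness_of_isPrime_colon {f : MvPolynomial V K} {k : ℕ}
    (hf : f.IsHomogeneous k) (hP : ((edgeIdeal K G).colon (Ideal.span {f})).IsPrime) :
    ∃ A : Finset V, G.IsVWitness A ∧ A.card ≤ k := by
  classical
  have hcover : G.IsVertexCover {v | X v * f ∈ edgeIdeal K G} := by
    intro i j hij
    simp_rw [Set.mem_ofPred_eq, ← Ideal.mem_colon_span_singleton]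
    refine hP.mem_or_mem (Ideal.mem_colon_span_singleton.mpr ?_)
    exact Ideal.mul_mem_right _ _ (Ideal.subset_span ⟨i, j, hij, rfl⟩)
  have hfI : f ∉ edgeIdeal K G := fun hf => hP.ne_top <| (Ideal.eq_top_iff_one _).mpr <|
    Ideal.mem_colon_span_singleton.mpr (by rwa [one_mul])
  obtain ⟨d, hd, hindep⟩ : ∃ d ∈ f.support, G.IsIndepSet (d.support : Set V) := by
    simpa [mem_edgeIdeal_iff_s6] using hfI
  refine ⟨d.support, ⟨hindep, hcover.subset fun v hv => ?_⟩, ?_⟩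
  · have hvd : Finsupp.single v 1 + d ∈ (X v * f).support := by
      simpa [coeff_X_mul] using hd
    have := mem_edgeIdeal_iff_s6.mp hv _ hvd
    rw [Finsupp.support_add_eq_union, Finsupp.support_single _ one_ne_zero,
      Finset.singleton_union, Finset.coe_insert, isIndepSet_insert] at this
    simpa [hindep] using this
  · calc d.support.card = ∑ _i ∈ d.support, 1 := Finset.card_eq_sum_ones _
      _ ≤ ∑ i ∈ d.support, d i :=
        Finset.sum_le_sum fun i hi => Nat.one_le_iff_ne_zero.mpr (Finsupp.mem_support_iff.mp hi)
      _ = k := by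
        rw [← hf (mem_support_iff.mp hd)]
        simp [Finsupp.weight_apply, Finsupp.sum]

theorem vNumber_edgeIdeal (G : SimpleGraph V) : vNumber (edgeIdeal K G) = G.vNum := by
  refine csInf_eq_csInf_of_forall_exists_le ?_ ?_
  · rintro k ⟨f, hf, hP⟩
    obtain ⟨A, hA, hk⟩ := exists_isVWitness_of_isPrime_colon hf hP.isPrime
    exact ⟨_, ⟨A, hA, rfl⟩, hk⟩
  · rintro _ ⟨A, hA, rfl⟩
    classical
    have hsupp : A.val.toFinsupp.support = A := by simp
    have hdeg : A.val.toFinsupp.degree = A.card := by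
      rw [Finsupp.degree_apply, ← Finset.card_val, ← Multiset.toFinsupp_sum_eq]
      rfl
    rw [← hsupp] at hA
    refine ⟨_, ⟨monomial A.val.toFinsupp 1, isHomogeneous_monomial _ hdeg, ?_⟩, le_rfl⟩
    exact Ideal.colon_mem_associatedPrimes_of_isPrime
      (colon_edgeIdeal_monomial (K := K) hA ▸ MvPolynomial.isPrime_span_X_image _)

end EdgeIdeal

namespace SimpleGraph

variable {V W : Type*} {G : SimpleGraph V} {H : SimpleGraph W} {A : Finset V}

theorem vNum_le_card_add_one {c : V} (hA : G.IsIndepSet A)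
    (hcov : G.IsVertexCover (insert c {v | ∃ a ∈ A, G.Adj a v})) : G.vNum ≤ A.card + 1 := by
  classical
  by_cases hc : c ∈ {v | ∃ a ∈ A, G.Adj a v}
  · rw [Set.insert_eq_of_mem hc] at hcov
    exact (vNum_le ⟨hA, hcov⟩).trans (Nat.le_succ _)
  -- Otherwise `c` can be added to `A`, and then its own neighbours cover its edges.
  refine (vNum_le (A := insert c A) ⟨?_, fun u v huv => ?_⟩).trans (Finset.card_insert_le _ _)
  · rw [Finset.coe_insert, isIndepSet_insert]
    exact ⟨hA, fun b hb hbc => hc ⟨b, hb, hbc⟩⟩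
  · rcases hcov huv with (rfl | ⟨a, ha, hau⟩) | (rfl | ⟨a, ha, hav⟩)
    · exact .inr ⟨u, Finset.mem_insert_self _ _, huv⟩
    · exact .inl ⟨a, Finset.mem_insert_of_mem ha, hau⟩
    · exact .inl ⟨v, Finset.mem_insert_self _ _, huv.symm⟩
    · exact .inr ⟨a, Finset.mem_insert_of_mem ha, hav⟩

theorem vNum_le_card_preimage_add [DecidableEq W] {φ : G ↪g H} {c : V} {w : W}
    (hφ : ∀ x b, H.Adj b (φ x) → b ∈ Set.range φ ∨ (b = w ∧ x = c))
    {A : Finset W} (hA : H.IsVWitness A) :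
    G.vNum ≤ (A.preimage φ φ.injective.injOn).card + if w ∈ A then 1 else 0 := by
  set A₁ := A.preimage φ φ.injective.injOn
  have hindep : G.IsIndepSet (A₁ : Set V) := fun x hx y hy hne hxy =>
    hA.1 (Finset.mem_preimage.mp hx) (Finset.mem_preimage.mp hy) (φ.injective.ne hne)
      (φ.map_adj_iff.mpr hxy)
  have hnbhd (x : V) (hx : ∃ b ∈ A, H.Adj b (φ x)) :
      x ∈ {v | ∃ a ∈ A₁, G.Adj a v} ∨ (x = c ∧ w ∈ A) := by
    obtain ⟨b, hb, hbx⟩ := hx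
    rcases hφ x b hbx with ⟨a, rfl⟩ | ⟨rfl, rfl⟩
    · exact .inl ⟨a, Finset.mem_preimage.mpr hb, φ.map_adj_iff.mp hbx⟩
    · exact .inr ⟨rfl, hb⟩
  have hcov : G.IsVertexCover ({v | ∃ a ∈ A₁, G.Adj a v} ∪ {v | v = c ∧ w ∈ A}) :=
    fun x y hxy => (hA.2 (φ.map_adj_iff.mpr hxy)).imp (hnbhd x) (hnbhd y)
  split_ifs with hw
  · exact vNum_le_card_add_one (c := c) hindep (hcov.subset
      (Set.union_subset (Set.subset_insert _ _) fun v (hv : v = c ∧ w ∈ A) =>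
        hv.1 ▸ Set.mem_insert _ _))
  · exact vNum_le ⟨hindep,
      hcov.subset (Set.union_subset subset_rfl fun v hv => absurd hv.2 hw)⟩

variable {V₁ V₂ : Type*}

/-- `G₁` and `G₂` joined by a path `c — none — p` through the new vertex `none`. -/
def bridge (G₁ : SimpleGraph V₁) (G₂ : SimpleGraph V₂) (c : V₁) (p : V₂) :
    SimpleGraph (Option (V₁ ⊕ V₂)) where
  Adj
    | some (.inl x), some (.inl y) => G₁.Adj x y
    | some (.inr x), some (.inr y) => G₂.Adj x y
    | none, some (.inl x) | some (.inl x), none => x = c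
    | none, some (.inr y) | some (.inr y), none => y = p
    | _, _ => False
  symm := ⟨by
    rintro (_ | x | y) (_ | x' | y') h <;> first | exact h | exact Adj.symm h⟩
  loopless := ⟨by
    rintro (_ | x | y) h
    · exact h
    · exact G₁.irrefl h
    · exact G₂.irrefl h⟩

variable {G₁ : SimpleGraph V₁} {G₂ : SimpleGraph V₂} {c : V₁} {p : V₂}

def bridgeLeft : G₁ ↪g bridge G₁ G₂ c p where
  toFun x := some (.inl x)
  inj' _ _ h := Sum.inl_injective (Option.some_injective _ h)
  map_rel_iff' := Iff.rfl

def bridgeRight : G₂ ↪g bridge G₁ G₂ c p where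
  toFun y := some (.inr y)
  inj' _ _ h := Sum.inr_injective (Option.some_injective _ h)
  map_rel_iff' := Iff.rfl

theorem vNum_bridge_le {A₁ : Finset V₁} {A₂ : Finset V₂} (hA₁ : G₁.IsVWitness A₁)
    (hc : c ∈ A₁) (hA₂ : G₂.IsVWitness A₂) : (bridge G₁ G₂ c p).vNum ≤ A₁.card + A₂.card := by
  set A := (A₁.disjSum A₂).map .some
  have hmem (b) : b ∈ A ↔ (∃ x ∈ A₁, some (.inl x) = b) ∨ ∃ y ∈ A₂, some (.inr y) = b := by
    simp [A, eq_comm]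
  have hN₁ (x : V₁) (hx : ∃ a ∈ A₁, G₁.Adj a x) :
      ∃ b ∈ A, (bridge G₁ G₂ c p).Adj b (some (.inl x)) :=
    have ⟨a, ha, hax⟩ := hx
    ⟨_, (hmem _).mpr (.inl ⟨a, ha, rfl⟩), hax⟩
  have hN₂ (y : V₂) (hy : ∃ a ∈ A₂, G₂.Adj a y) :
      ∃ b ∈ A, (bridge G₁ G₂ c p).Adj b (some (.inr y)) :=
    have ⟨a, ha, hay⟩ := hy
    ⟨_, (hmem _).mpr (.inr ⟨a, ha, rfl⟩), hay⟩
  have hnone : ∃ b ∈ A, (bridge G₁ G₂ c p).Adj b none :=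
    ⟨_, (hmem _).mpr (.inl ⟨c, hc, rfl⟩), rfl⟩
  refine (vNum_le (A := A) ⟨?_, ?_⟩).trans (by simp [A])
  · intro a ha b hb hne hab
    rw [Finset.mem_coe, hmem] at ha hb
    rcases ha with ⟨x, hx, rfl⟩ | ⟨y, hy, rfl⟩ <;>
      rcases hb with ⟨x', hx', rfl⟩ | ⟨y', hy', rfl⟩
    · exact hA₁.1 hx hx' (by rintro rfl; exact hne rfl) hab
    · exact hab
    · exact hab
    · exact hA₂.1 hy hy' (by rintro rfl; exact hne rfl) hab
  · rintro (_ | x | y) (_ | x' | y') huv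
    all_goals first
      | exact huv.elim
      | exact .inl hnone
      | exact .inr hnone
      | exact (hA₁.2 huv).imp (hN₁ _) (hN₁ _)
      | exact (hA₂.2 huv).imp (hN₂ _) (hN₂ _)

theorem vNum_add_vNum_le_vNum_bridge_add_one [Finite V₁] [Finite V₂] :
    G₁.vNum + G₂.vNum ≤ (bridge G₁ G₂ c p).vNum + 1 := by
  classical
  obtain ⟨A, hA, hcard⟩ := exists_isVWitness_card_eq_vNum (bridge G₁ G₂ c p)
  have h₁ : G₁.vNum ≤ (A.preimage (some ∘ Sum.inl) _).card + if none ∈ A then 1 else 0 :=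
    vNum_le_card_preimage_add (φ := bridgeLeft) (c := c) (w := none) (by
      rintro x (_ | b | b) h <;>
        first | exact .inr ⟨rfl, h⟩ | exact .inl ⟨b, rfl⟩ | exact h.elim) hA
  have h₂ : G₂.vNum ≤ (A.preimage (some ∘ Sum.inr) _).card + if none ∈ A then 1 else 0 :=
    vNum_le_card_preimage_add (φ := bridgeRight) (c := p) (w := none) (by
      rintro x (_ | b | b) h <;>
        first | exact .inr ⟨rfl, h⟩ | exact .inl ⟨b, rfl⟩ | exact h.elim) hA
  have hsplit := A.card_preimage_inl_add_card_preimage_inr_add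
  split_ifs at h₁ h₂ hsplit <;> omega

theorem cycleGraph_adj_iff_val {n : ℕ} (hn : 2 ≤ n) {u v : Fin n} :
    (cycleGraph n).Adj u v ↔ u.val = v.val + 1 ∨ v.val = u.val + 1 ∨
      (u.val = 0 ∧ v.val + 1 = n) ∨ (v.val = 0 ∧ u.val + 1 = n) := by
  rw [cycleGraph_adj', Fin.val_sub_eq_one_iff hn, Fin.val_sub_eq_one_iff hn]
  tauto

def cycleGraphRotate {n : ℕ} [NeZero n] (t : Fin n) : cycleGraph n ≃g cycleGraph n where
  toEquiv := Equiv.addRight t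
  map_rel_iff' := by simp [cycleGraph_adj', add_sub_add_right_eq_sub]

theorem exists_isVWitness_cycleGraph_mem {n : ℕ} (hn : 2 ≤ n) (c : Fin n) :
    ∃ A, (cycleGraph n).IsVWitness A ∧ c ∈ A ∧ A.card = (cycleGraph n).vNum := by
  have : NeZero n := ⟨by omega⟩
  obtain ⟨A, hA, hcard⟩ := exists_isVWitness_card_eq_vNum (cycleGraph n)
  have hadj : (cycleGraph n).Adj 0 ⟨1, by omega⟩ := by
    rw [cycleGraph_adj_iff_val hn]
    simp
  obtain ⟨a, ha⟩ : A.Nonempty := by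
    rcases hA.2 hadj with ⟨a, ha, -⟩ | ⟨a, ha, -⟩ <;> exact ⟨a, ha⟩
  refine ⟨_, hA.map (cycleGraphRotate (c - a)), ?_, by rw [Finset.card_map, hcard]⟩
  exact Finset.mem_map.mpr ⟨a, ha, by simp [cycleGraphRotate]⟩

def bridgeIsoCyclePathSum {n m : ℕ} (hn : 2 ≤ n) (hm : 3 ≤ m) :
    bridge (cycleGraph n) (pathGraph (m - 2)) ⟨0, by omega⟩ ⟨0, by omega⟩ ≃g
      cyclePathSum n m :=
  let φ : Option (Fin n ⊕ Fin (m - 2)) → Fin (n + (m - 1))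
    | none => ⟨n, by omega⟩
    | some (.inl x) => ⟨x, by omega⟩
    | some (.inr y) => ⟨n + 1 + y, by omega⟩
  have hinj : φ.Injective := by
    rintro (_ | x | y) (_ | x' | y') h <;> simp [φ, Fin.ext_iff] at h ⊢ <;> omega
  { Equiv.ofBijective φ
      ((Fintype.bijective_iff_injective_and_card φ).mpr ⟨hinj, by simp; omega⟩) with
    map_rel_iff' := by
      rintro (_ | x | y) (_ | x' | y') <;>
        simp [φ, bridge, cyclePathSum, cycleGraph_adj_iff_val hn, pathGraph_adj, Fin.ext_iff] <;>
        omega }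

end SimpleGraph

/-- v(C_n) + v(P_{m-2}) - 1 ≤ v(H) ≤ v(C_n) + v(P_{m-2}) for the 1-clique sum H
of C_n and P_m. -/
theorem vNumber_cyclePathSum {K : Type*} [Field K] (n m : ℕ) (hn : 3 ≤ n) (hm : 4 ≤ m) :
    vNumber (edgeIdeal K (SimpleGraph.cycleGraph n)) +
        vNumber (edgeIdeal K (SimpleGraph.pathGraph (m - 2))) - 1 ≤
      vNumber (edgeIdeal K (cyclePathSum n m)) ∧
    vNumber (edgeIdeal K (cyclePathSum n m)) ≤
      vNumber (edgeIdeal K (SimpleGraph.cycleGraph n)) +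
        vNumber (edgeIdeal K (SimpleGraph.pathGraph (m - 2))) := by
  simp only [vNumber_edgeIdeal]
  rw [← (SimpleGraph.bridgeIsoCyclePathSum (n := n) (m := m) (by omega) (by omega)).vNum_eq]
  obtain ⟨A₁, hA₁, h0, hcard₁⟩ :=
    SimpleGraph.exists_isVWitness_cycleGraph_mem (by omega) (⟨0, by omega⟩ : Fin n)
  obtain ⟨A₂, hA₂, hcard₂⟩ :=
    SimpleGraph.exists_isVWitness_card_eq_vNum (SimpleGraph.pathGraph (m - 2))
  have hle := SimpleGraph.vNum_bridge_le hA₁ h0 hA₂ (p := ⟨0, by omega⟩)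
  have hge := SimpleGraph.vNum_add_vNum_le_vNum_bridge_add_one
    (G₁ := SimpleGraph.cycleGraph n) (G₂ := SimpleGraph.pathGraph (m - 2))
    (c := ⟨0, by omega⟩) (p := ⟨0, by omega⟩)
  omega
end
end

section
/- Let I ⊆ S = K[x_1,…,x_t] be an 𝔪-primary monomial ideal. Then there exists a positive integer s_0 such that v(I^{s+1}) ≥ v(I) for all s ≥ s_0. -/
open MvPolynomial

noncomputable section

/-! If `I` is `𝔪`-primary, so is `J = I ^ (s + 1)`, and `J ⊆ 𝔪 ^ (s + 1)`. Then `𝔪` is the only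
prime containing `J`, so any `f` with `(J : f)` an associated prime satisfies `x_i f ∈ 𝔪 ^ (s + 1)`,
which for homogeneous `f ≠ 0` forces `deg f ≥ s`. Hence `v(I ^ (s + 1)) ≥ s > v(I)` for `s > v(I)`. -/

section

variable {σ K : Type*} [Field K]

theorem maxIdeal_eq_bot [IsEmpty σ] : maxIdeal K σ = ⊥ := by
  rw [maxIdeal, Set.range_eq_empty, Ideal.span_empty]

theorem maxIdeal_eq_ker_constantCoeff :
    maxIdeal K σ = RingHom.ker (constantCoeff : MvPolynomial σ K →+* K) := by
  ext p
  rw [maxIdeal, ← pow_one (Ideal.span _), ← idealOfVars, mem_pow_idealOfVars_iff, RingHom.mem_ker,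
    constantCoeff_eq, ← notMem_support_iff]
  refine ⟨fun h h0 => by simpa using h 0 h0, fun h d hd => ?_⟩
  rw [Nat.one_le_iff_ne_zero, Ne, Finsupp.degree_eq_zero_iff]
  rintro rfl
  exact h hd

theorem maxIdeal_isMaximal : (maxIdeal K σ).IsMaximal := by
  rw [maxIdeal_eq_ker_constantCoeff]
  exact RingHom.ker_isMaximal_of_surjective _ fun k => ⟨C k, constantCoeff_C _ _⟩

theorem MvPolynomial.IsHomogeneous.le_of_mem_maxIdeal_pow {f : MvPolynomial σ K} {k n : ℕ}
    (hf : f.IsHomogeneous k) (hf0 : f ≠ 0) (h : f ∈ maxIdeal K σ ^ n) : n ≤ k := by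
  obtain ⟨d, hd⟩ := support_nonempty.mpr hf0
  calc n ≤ d.degree := (mem_pow_idealOfVars_iff n f).mp h d hd
    _ ≤ f.totalDegree := le_totalDegree hd
    _ = k := hf.totalDegree hf0

theorem Ideal.colon_span_singleton_mem_associatedPrimes_iff {R : Type*} [CommRing R]
    [IsNoetherianRing R] (J : Ideal R) (f : R) :
    J.colon (Ideal.span {f}) ∈ associatedPrimes R (R ⧸ J) ↔ (J.colon (Ideal.span {f})).IsPrime := by
  refine ⟨IsAssociatedPrime.isPrime, fun hP => (isAssociatedPrime_iff).mpr
    ⟨hP, Ideal.Quotient.mk J f, ?_⟩⟩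
  ext r
  rw [Ideal.mem_colon_span_singleton, Submodule.mem_colon_singleton, Submodule.mem_bot,
    Algebra.smul_def, Ideal.Quotient.algebraMap_eq, ← map_mul, Ideal.Quotient.eq_zero_iff_mem]

theorem monomial_mem_of_X_pow_mem {R : Type*} [CommSemiring R] {J : Ideal (MvPolynomial σ R)}
    {i : σ} {n : ℕ} (h : X i ^ n ∈ J) {a : σ →₀ ℕ} (hn : n ≤ a i) : monomial a (1 : R) ∈ J := by
  have hle : Finsupp.single i n ≤ a := Finsupp.single_le_iff.mpr hn
  rw [← add_tsub_cancel_of_le hle, ← one_mul (1 : R), ← monomial_mul, ← X_pow_eq_monomial]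
  exact J.mul_mem_right _ h

theorem colon_eq_maxIdeal_of_X_mul_mem {J : Ideal (MvPolynomial σ K)} {f : MvPolynomial σ K}
    (hf : f ∉ J) (hX : ∀ i, X i * f ∈ J) : J.colon (Ideal.span {f}) = maxIdeal K σ := by
  refine (maxIdeal_isMaximal.eq_of_le ?_ ?_).symm
  · rw [Ne, Ideal.eq_top_iff_one, Ideal.mem_colon_span_singleton, one_mul]
    exact hf
  · rw [maxIdeal, Ideal.span_le, Set.range_subset_iff]
    exact fun i => Ideal.mem_colon_span_singleton.mpr (hX i)

/-- Since `x_i ^ c_i ∈ J`, only finitely many monomials lie outside `J`; one of maximal degree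
has colon ideal `𝔪`. -/
theorem exists_monomial_colon_eq_maxIdeal [Finite σ] {J : Ideal (MvPolynomial σ K)}
    (hJ : maxIdeal K σ ≤ J.radical) (hJtop : J ≠ ⊤) :
    ∃ a : σ →₀ ℕ, J.colon (Ideal.span {monomial a (1 : K)}) = maxIdeal K σ := by
  have hpow (i : σ) : ∃ n, (X i : MvPolynomial σ K) ^ n ∈ J := hJ (Ideal.subset_span ⟨i, rfl⟩)
  choose c hc using hpow
  set outside := {a : σ →₀ ℕ | monomial a (1 : K) ∉ J}
  have hfin : outside.Finite := by
    classical
    refine (Set.finite_Iic (Finsupp.equivFunOnFinite.symm c)).subset fun a ha i => ?_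
    by_contra hlt
    exact ha (monomial_mem_of_X_pow_mem (hc i) (not_le.mp hlt).le)
  have hne : outside.Nonempty := by
    refine ⟨0, ?_⟩
    rwa [Set.mem_ofPred_eq, monomial_zero', map_one, ← Ideal.eq_top_iff_one]
  obtain ⟨a, ha, hmax⟩ := outside.exists_max_image Finsupp.degree hfin hne
  refine ⟨a, colon_eq_maxIdeal_of_X_mul_mem ha fun i => ?_⟩
  by_contra hXa
  have hXmul : X i * monomial a (1 : K) = monomial (a + Finsupp.single i 1) 1 := by
    rw [X, monomial_mul, one_mul, add_comm]
  have hdeg := hmax (a + Finsupp.single i 1) (hXmul ▸ hXa)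
  simp at hdeg

theorem le_vNumber_of_le_maxIdeal_pow [Finite σ] [Nonempty σ] {J : Ideal (MvPolynomial σ K)}
    {n : ℕ} (hrad : J.radical = maxIdeal K σ) (hJ : J ≤ maxIdeal K σ ^ (n + 1)) :
    n ≤ vNumber J := by
  have hJtop : J ≠ ⊤ := fun h => maxIdeal_isMaximal.ne_top (by rw [← hrad, h, Ideal.radical_top])
  obtain ⟨a, ha⟩ := exists_monomial_colon_eq_maxIdeal hrad.ge hJtop
  refine le_csInf ⟨a.degree, monomial a 1, isHomogeneous_monomial _ rfl, ?_⟩ ?_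
  · rw [Ideal.colon_span_singleton_mem_associatedPrimes_iff, ha]
    exact maxIdeal_isMaximal.isPrime
  rintro k ⟨f, hf, hass⟩
  rw [Ideal.colon_span_singleton_mem_associatedPrimes_iff] at hass
  have hfJ : f ∉ J := fun hfJ => hass.ne_top <| by
    rw [Ideal.eq_top_iff_one, Ideal.mem_colon_span_singleton, one_mul]
    exact hfJ
  have hf0 : f ≠ 0 := fun h => hfJ (h ▸ J.zero_mem)
  have hmax : maxIdeal K σ ≤ J.colon (Ideal.span {f}) := by
    rw [← hrad, ← hass.radical]
    exact Ideal.radical_mono fun r hr => Ideal.mem_colon_span_singleton.mpr (J.mul_mem_right f hr)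
  obtain ⟨i⟩ := ‹Nonempty σ›
  have hXf : X i * f ∈ J := Ideal.mem_colon_span_singleton.mp (hmax (Ideal.subset_span ⟨i, rfl⟩))
  have hdeg : n + 1 ≤ 1 + k :=
    ((isHomogeneous_X K i).mul hf).le_of_mem_maxIdeal_pow (mul_ne_zero (X_ne_zero i) hf0) (hJ hXf)
  omega

end

theorem vNumber_pow_ge_vNumber_general {K : Type*} [Field K] (t : ℕ)
    (I : Ideal (MvPolynomial (Fin t) K))
    (hprim : I.radical = maxIdeal K (Fin t)) :
    ∃ s₀ : ℕ, 0 < s₀ ∧ ∀ s, s₀ ≤ s → vNumber I ≤ vNumber (I ^ (s + 1)) := by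
  refine ⟨vNumber I + 1, Nat.succ_pos _, fun s hs => ?_⟩
  cases isEmpty_or_nonempty (Fin t)
  · have hI : I = ⊥ := le_bot_iff.mp (maxIdeal_eq_bot (σ := Fin t) (K := K) ▸ hprim ▸ I.le_radical)
    rw [hI, ← Ideal.zero_eq_bot, zero_pow s.succ_ne_zero]
  · have hIm : I ≤ maxIdeal K (Fin t) := hprim ▸ I.le_radical
    calc vNumber I ≤ s := by omega
      _ ≤ vNumber (I ^ (s + 1)) :=
        le_vNumber_of_le_maxIdeal_pow (by rw [I.radical_pow s.succ_ne_zero, hprim])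
          (Ideal.pow_right_mono hIm _)

/-- for an 𝔪-primary monomial ideal, v(I^{s+1}) ≥ v(I) for all s ≫ 0. -/
theorem vNumber_pow_ge_vNumber {K : Type*} [Field K] (t : ℕ)
    (I : Ideal (MvPolynomial (Fin t) K))
    (hmon : IsMonomialIdeal I) (hprim : I.radical = maxIdeal K (Fin t)) :
    ∃ s₀ : ℕ, 0 < s₀ ∧ ∀ s, s₀ ≤ s → vNumber I ≤ vNumber (I ^ (s + 1)) :=
  vNumber_pow_ge_vNumber_general t I hprim
end
end
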